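/- Let S = {(0,0),(0,1),(0,2),(1,0),(1,1),(2,0)} index the degree-2 total order basis on the reference quadrilateral. Let M be the diagonal real S×S matrix with M_{(v,w),(v,w)} = 4/((2v+1)(2w+1)), i.e. M = diag(4, 4/3, 4/5, 4/3, 4/9, 4/5) in the listed order. For real parameters q0, q1, q2, let Q be the symmetric S×S matrix whose only nonzero entries are Q_{(0,2),(0,2)} = Q_{(2,0),(2,0)} = q0, Q_{(0,2),(2,0)} = Q_{(2,0),(0,2)} = q2, and Q_{(1,1),(1,1)} = q1. If q1 > −4/9, q0 > −4/9, and (5·q0 + 4)² − 25·q2² > 0, then M + Q is positive definite. -/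

import Mathlib

/-- The index set of the degree-2 total order basis: modes `(v,w)` with `v + w ≤ 2`. -/
def TO2 : Type := {p : Fin 3 × Fin 3 // (p.1 : ℕ) + (p.2 : ℕ) ≤ 2}

instance : Fintype TO2 := Subtype.fintype _
instance : DecidableEq TO2 := Subtype.instDecidableEq

/-- Modal mass matrix of the degree-2 total order Legendre basis:
`M_{(v,w),(v,w)} = 4/((2v+1)(2w+1))`. -/
noncomputable def massTO2 : Matrix TO2 TO2 ℝ :=
  Matrix.diagonal fun p =>
    (4 : ℝ) / (((2 * (p.val.1 : ℕ) + 1) * (2 * (p.val.2 : ℕ) + 1) : ℕ) : ℝ)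

/-- The symmetric filter matrix `Q(q0, q1, q2)` for the degree-2 total order basis. -/
def filterTO2 (q0 q1 q2 : ℝ) : Matrix TO2 TO2 ℝ :=
  fun i j =>
    if (i.val = (0, 2) ∧ j.val = (0, 2)) ∨ (i.val = (2, 0) ∧ j.val = (2, 0)) then q0
    else if (i.val = (0, 2) ∧ j.val = (2, 0)) ∨ (i.val = (2, 0) ∧ j.val = (0, 2)) then q2
    else if i.val = (1, 1) ∧ j.val = (1, 1) then q1
    else 0

/-!
On the modes `(0,0), (0,1), (1,0), (1,1)` the matrix `M + Q` is diagonal with entries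
`4, 4/3, 4/3, 4/9 + q1`, and on `(0,2), (2,0)` it is the block `[[4/5 + q0, q2], [q2, 4/5 + q0]]`,
whose quadratic form is at least `(4/5 + q0 - |q2|)(u² + v²)`. Since `q1 > -4/9` and
`5|q2| < 5 q0 + 4`, all these coefficients are positive, so the quadratic form of `M + Q`
dominates `c ‖x‖²` for the smallest of them.
-/

open Matrix

lemma Matrix.PosDef.of_mul_dotProduct_self_le {n : Type*} [Fintype n] {A : Matrix n n ℝ}
    (hA : A.IsHermitian) {c : ℝ} (hc : 0 < c) (h : ∀ x, c * (x ⬝ᵥ x) ≤ x ⬝ᵥ A *ᵥ x) :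
    A.PosDef :=
  .of_dotProduct_mulVec_pos hA fun x hx =>
    (mul_pos hc (dotProduct_star_self_pos_iff.2 hx)).trans_le (h x)

lemma sub_abs_mul_sq_add_sq_le (a b u v : ℝ) :
    (a - |b|) * (u ^ 2 + v ^ 2) ≤ a * (u ^ 2 + v ^ 2) + 2 * b * u * v := by
  rcases le_total 0 b with hb | hb
  · rw [abs_of_nonneg hb]
    nlinarith [mul_nonneg hb (sq_nonneg (u + v))]
  · rw [abs_of_nonpos hb]
    nlinarith [mul_nonneg (neg_nonneg.2 hb) (sq_nonneg (u - v))]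

namespace TO2

def mode (v w : Fin 3) (h : (v : ℕ) + w ≤ 2 := by decide) : TO2 := ⟨(v, w), h⟩

lemma sum_univ {M : Type*} [AddCommMonoid M] (f : TO2 → M) :
    ∑ i, f i =
      f (mode 0 0) + f (mode 0 1) + f (mode 0 2) + f (mode 1 0) + f (mode 1 1) + f (mode 2 0) := by
  rw [show (Finset.univ : Finset TO2) =
      {mode 0 0, mode 0 1, mode 0 2, mode 1 0, mode 1 1, mode 2 0} by decide]
  repeat rw [Finset.sum_insert (by decide)]
  rw [Finset.sum_singleton]
  abel

end TO2

open TO2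

lemma isHermitian_filterTO2 (q0 q1 q2 : ℝ) : (filterTO2 q0 q1 q2).IsHermitian := by
  ext i j
  simp only [conjTranspose_apply, star_trivial, filterTO2]
  grind

lemma dotProduct_massTO2_add_filterTO2_mulVec (q0 q1 q2 : ℝ) (x : TO2 → ℝ) :
    x ⬝ᵥ (massTO2 + filterTO2 q0 q1 q2) *ᵥ x =
      4 * x (mode 0 0) ^ 2 + 4 / 3 * x (mode 0 1) ^ 2 + 4 / 3 * x (mode 1 0) ^ 2
        + (4 / 9 + q1) * x (mode 1 1) ^ 2
        + ((4 / 5 + q0) * (x (mode 0 2) ^ 2 + x (mode 2 0) ^ 2)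
          + 2 * q2 * x (mode 0 2) * x (mode 2 0)) := by
  rw [add_mulVec, dotProduct_add, massTO2,
    show diagonal _ *ᵥ x = _ from funext (mulVec_diagonal _ x)]
  simp only [dotProduct, Nat.cast_mul, Nat.cast_add, Nat.cast_ofNat, Nat.cast_one, sum_univ, mode,
    Fin.isValue, Fin.coe_ofNat_eq_mod, Nat.zero_mod, CharP.cast_eq_zero, mul_zero, zero_add,
    mul_one, div_one, Nat.one_mod, one_mul, Nat.mod_succ, mulVec, filterTO2, ite_mul, zero_mul,
    Prod.mk.injEq, Fin.reduceEq, and_false, and_true, or_self, ↓reduceIte, zero_ne_one, and_self,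
    one_ne_zero, add_zero, or_false, false_or]
  ring

/-- For the degree-2 total order basis, if `q1 > -4/9`, `q0 > -4/9` and
`(5 q0 + 4)² - 25 q2² > 0`, then `M + Q` is positive definite. -/
theorem stmt_2 (q0 q1 q2 : ℝ) (h1 : q1 > -4 / 9) (h0 : q0 > -4 / 9)
    (h2 : (5 * q0 + 4) ^ 2 - 25 * q2 ^ 2 > 0) :
    (massTO2 + filterTO2 q0 q1 q2).PosDef := by
  have hq2 : |q2| < 4 / 5 + q0 := by
    have := abs_lt_of_sq_lt_sq (a := 5 * q2) (b := 5 * q0 + 4) (by linarith) (by linarith)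
    rw [abs_mul, abs_of_pos (by norm_num : (0 : ℝ) < 5)] at this
    linarith
  set c := min (min (4 / 9 + q1) (4 / 5 + q0 - |q2|)) (4 / 3)
  have hc : 0 < c := lt_min (lt_min (by linarith) (by linarith)) (by norm_num)
  have hc₁ : c ≤ 4 / 9 + q1 := (min_le_left _ _).trans (min_le_left _ _)
  have hc₂ : c ≤ 4 / 5 + q0 - |q2| := (min_le_left _ _).trans (min_le_right _ _)
  have hc₃ : c ≤ 4 / 3 := min_le_right _ _
  refine .of_mul_dotProduct_self_le ((isHermitian_diagonal _).add (isHermitian_filterTO2 ..))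
    hc fun x => ?_
  rw [dotProduct_massTO2_add_filterTO2_mulVec, dotProduct, sum_univ]
  have hblock := sub_abs_mul_sq_add_sq_le (4 / 5 + q0) q2 (x (mode 0 2)) (x (mode 2 0))
  linarith [mul_le_mul_of_nonneg_right hc₁ (sq_nonneg (x (mode 1 1))),
    mul_le_mul_of_nonneg_right hc₂ (add_nonneg (sq_nonneg (x (mode 0 2))) (sq_nonneg (x (mode 2 0)))),
    mul_le_mul_of_nonneg_right hc₃ (sq_nonneg (x (mode 0 1))),
    mul_le_mul_of_nonneg_right hc₃ (sq_nonneg (x (mode 1 0))),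
    mul_le_mul_of_nonneg_right (hc₃.trans (by norm_num : (4 : ℝ) / 3 ≤ 4)) (sq_nonneg (x (mode 0 0)))]
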